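/- Let k be a positive integer and ζ an irrational real number with λ_{k,1}(ζ) > 1. Then λ̂_{k,1}(ζ) = 1/k. -/

import Mathlib

open scoped ENNReal

/-- The system `|x| ≤ X`, `max_{1≤i≤k} |ζ_i·x − y_i| ≤ X^(−η)` has at least `j`
linearly independent integer solutions `(x, y_1, …, y_k) ∈ ℤ^(k+1)`.
Here the solution vector `v i : Fin (k+1) → ℤ` has `x = v i 0` and `y_m = v i m.succ`. -/
def HasSolutions (k : ℕ) (ζ : Fin k → ℝ) (η X : ℝ) (j : ℕ) : Prop :=
  ∃ v : Fin j → (Fin (k + 1) → ℤ), LinearIndependent ℤ v ∧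
    ∀ i : Fin j, |(v i 0 : ℝ)| ≤ X ∧
      ∀ m : Fin k, |ζ m * (v i 0 : ℝ) - (v i m.succ : ℝ)| ≤ X ^ (-η)

/-- `λ_{k,j}(ζ⃗)`: the supremum in `[0,∞]` of all `η ∈ ℝ` such that the system has at
least `j` linearly independent solutions for arbitrarily large real `X`. -/
noncomputable def lambdaVec (k j : ℕ) (ζ : Fin k → ℝ) : ℝ≥0∞ :=
  sSup {e : ℝ≥0∞ | ∃ η : ℝ, e = ENNReal.ofReal η ∧
    ∀ X₀ : ℝ, ∃ X : ℝ, X₀ ≤ X ∧ HasSolutions k ζ η X j}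

/-- `λ̂_{k,j}(ζ⃗)`: the supremum in `[0,∞]` of all `η ∈ ℝ` such that the system has at
least `j` linearly independent solutions for every sufficiently large real `X`. -/
noncomputable def lambdaHatVec (k j : ℕ) (ζ : Fin k → ℝ) : ℝ≥0∞ :=
  sSup {e : ℝ≥0∞ | ∃ η : ℝ, e = ENNReal.ofReal η ∧
    ∃ X₀ : ℝ, ∀ X : ℝ, X₀ ≤ X → HasSolutions k ζ η X j}

/-- `λ_{k,j}(ζ) = λ_{k,j}(ζ, ζ², …, ζ^k)`. -/
noncomputable def lambdaPow (k j : ℕ) (ζ : ℝ) : ℝ≥0∞ :=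
  lambdaVec k j fun i => ζ ^ ((i : ℕ) + 1)

/-- `λ̂_{k,j}(ζ) = λ̂_{k,j}(ζ, ζ², …, ζ^k)`. -/
noncomputable def lambdaHatPow (k j : ℕ) (ζ : ℝ) : ℝ≥0∞ :=
  lambdaHatVec k j fun i => ζ ^ ((i : ℕ) + 1)

/-!
Dirichlet's box principle gives `λ̂_{k,1}(ζ⃗) ≥ 1/k` for every `ζ⃗`.

For the converse, let `p/q` be a reduced fraction and `(x, y₁, …, y_k)` an approximation of
`(ζ, …, ζ^k)`, with `y₀ = x`. The integers `y_m p - y_{m+1} q = q (ζ y_m - y_{m+1}) - y_m (ζ q - p)`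
vanish as soon as `q ε` and `X |ζ q - p|` are small, where `|x| ≤ X` and `ε` bounds the errors
`|ζ^m x - y_m|`; then `y_m / x = (p/q)^m`, so `q^k ∣ x`.
Applied to a very good approximation at scale `X` (one exists for arbitrarily large `X` since
`λ_{k,1}(ζ) > 1`), with `p/q` the reduction of `y₁/x`, this gives `q^k ≤ x ≤ X`, hence
`|ζ q - p| ≤ q^{1-k(1+η₀)}` with `η₀ > 1`; irrationality of `ζ` makes such `q` unbounded.
Applied again at scale `X = q^k/2` with exponent `η > 1/k`, it forces `x ≥ q^k > X`,
so the system has no solution there.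
-/
open Filter Topology

lemma hasSolutions_one_iff {k : ℕ} {ζ : Fin k → ℝ} {η X : ℝ} :
    HasSolutions k ζ η X 1 ↔ ∃ v : Fin (k + 1) → ℤ, v ≠ 0 ∧ |(v 0 : ℝ)| ≤ X ∧
      ∀ m : Fin k, |ζ m * v 0 - v m.succ| ≤ X ^ (-η) := by
  constructor
  · rintro ⟨v, hv, hX⟩
    exact ⟨v 0, linearIndependent_unique_iff.mp hv, hX 0⟩
  · rintro ⟨v, hv, hX⟩
    exact ⟨fun _ => v, linearIndependent_unique_iff.mpr hv, fun _ => hX⟩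

lemma exists_simultaneous_approx {k : ℕ} (ζ : Fin k → ℝ) {N : ℕ} (hN : 0 < N) :
    ∃ v : Fin (k + 1) → ℤ, 0 < v 0 ∧ v 0 ≤ N ^ k ∧
      ∀ m : Fin k, |ζ m * v 0 - v m.succ| < 1 / N := by
  have hN' : (0 : ℝ) < N := by exact_mod_cast hN
  let box : ℕ → Fin k → ℤ := fun n m => ⌊Int.fract (ζ m * n) * N⌋
  have hbox : ∀ n ∈ Finset.range (N ^ k + 1),
      box n ∈ Fintype.piFinset fun _ => Finset.Ico (0 : ℤ) N := by
    intro n _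
    simp only [box, Fintype.mem_piFinset, Finset.mem_Ico, Int.floor_nonneg, Int.floor_lt]
    exact fun m => ⟨by positivity, by
      exact_mod_cast mul_lt_of_lt_one_left hN' (Int.fract_lt_one _)⟩
  have hcard : (Fintype.piFinset fun _ : Fin k => Finset.Ico (0 : ℤ) N).card <
      (Finset.range (N ^ k + 1)).card := by
    simp
  obtain ⟨a, b, hab, hb, hbox_eq⟩ :
      ∃ a b : ℕ, a < b ∧ b ≤ N ^ k ∧ box a = box b := by
    obtain ⟨a, ha, b, hb, hne, he⟩ := Finset.exists_ne_map_eq_of_card_lt_of_maps_to hcard hbox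
    simp only [Finset.mem_range, Nat.lt_succ_iff] at ha hb
    rcases hne.lt_or_gt with h | h
    exacts [⟨a, b, h, hb, he⟩, ⟨b, a, h, ha, he.symm⟩]
  refine ⟨Fin.cases ((b : ℤ) - a) fun m => ⌊ζ m * b⌋ - ⌊ζ m * a⌋, by simpa using hab,
    ?_, fun m => ?_⟩
  · simp only [Fin.cases_zero]
    have : (b : ℤ) ≤ N ^ k := by exact_mod_cast hb
    omega
  have hfract := Int.abs_sub_lt_one_of_floor_eq_floor (congrFun hbox_eq m).symm
  rw [← sub_mul, abs_mul, abs_of_pos hN', ← lt_div_iff₀ hN'] at hfract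
  refine lt_of_eq_of_lt (congrArg abs ?_) hfract
  simp only [Fin.cases_zero, Fin.cases_succ, Int.fract]
  push_cast
  ring

lemma eventually_hasSolutions_one {k : ℕ} (hk : 0 < k) (ζ : Fin k → ℝ) {η : ℝ} (hη : 0 < η)
    (hηk : η < (k : ℝ)⁻¹) : ∀ᶠ X in atTop, HasSolutions k ζ η X 1 := by
  filter_upwards [(tendsto_rpow_atTop (sub_pos.mpr hηk)).eventually_ge_atTop 2,
    eventually_ge_atTop 1] with X hgap hX
  have hX₀ : 0 ≤ X := by linarith
  set N := ⌊X ^ (k : ℝ)⁻¹⌋₊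
  -- `X ^ (1/k) ≥ 2 X ^ η ≥ X ^ η + 1`, so that `X ^ η ≤ N ≤ X ^ (1/k)`.
  have hXη : 1 ≤ X ^ η := Real.one_le_rpow hX hη.le
  have hroot : X ^ η + 1 ≤ X ^ (k : ℝ)⁻¹ := by
    have : X ^ (k : ℝ)⁻¹ = X ^ η * X ^ ((k : ℝ)⁻¹ - η) := by
      rw [← Real.rpow_add (by linarith)]; ring_nf
    nlinarith
  have hηN : X ^ η ≤ N := by
    have := Nat.lt_floor_add_one (X ^ (k : ℝ)⁻¹)
    linarith
  have hN : 0 < N := (Nat.cast_pos (α := ℝ)).mp (by linarith)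
  obtain ⟨v, hv0, hvN, hv⟩ := exists_simultaneous_approx ζ hN
  refine hasSolutions_one_iff.mpr ⟨v, fun h => hv0.ne' (congrFun h 0), ?_, fun m => ?_⟩
  · calc |(v 0 : ℝ)| = v 0 := abs_of_pos (by exact_mod_cast hv0)
      _ ≤ (N : ℝ) ^ k := by exact_mod_cast hvN
      _ ≤ (X ^ (k : ℝ)⁻¹) ^ k := by gcongr; exact Nat.floor_le (by positivity)
      _ = X := Real.rpow_inv_natCast_pow hX₀ hk.ne'
  · calc |ζ m * v 0 - v m.succ| ≤ 1 / N := (hv m).le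
      _ ≤ 1 / X ^ η := by gcongr
      _ = X ^ (-η) := by rw [Real.rpow_neg hX₀, one_div]

lemma ENNReal.ofReal_inv_natCast {k : ℕ} (hk : 0 < k) :
    ENNReal.ofReal (k : ℝ)⁻¹ = 1 / (k : ℝ≥0∞) := by
  rw [one_div, ENNReal.ofReal_inv_of_pos (by exact_mod_cast hk), ENNReal.ofReal_natCast]

lemma one_div_le_lambdaHatVec_one {k : ℕ} (hk : 0 < k) (ζ : Fin k → ℝ) :
    1 / (k : ℝ≥0∞) ≤ lambdaHatVec k 1 ζ := by
  unfold lambdaHatVec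
  refine le_of_forall_lt_imp_le_of_dense fun c hc => ?_
  rw [← ENNReal.ofReal_inv_natCast hk, ENNReal.lt_iff_exists_real_btwn] at hc
  obtain ⟨η, -, hcη, hηk⟩ := hc
  have hη : 0 < η := ENNReal.ofReal_pos.mp (hcη.trans_le' bot_le)
  refine hcη.le.trans (le_sSup ?_)
  refine ⟨η, rfl, eventually_atTop.mp ?_⟩
  exact eventually_hasSolutions_one hk ζ hη
    ((ENNReal.ofReal_lt_ofReal_iff (by positivity)).mp hηk)

lemma exists_pos_of_hasSolutions_one {k : ℕ} {ζ : Fin k → ℝ} {η X : ℝ} (hε : X ^ (-η) < 1)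
    (hs : HasSolutions k ζ η X 1) :
    ∃ v : Fin (k + 1) → ℤ, 0 < v 0 ∧ (v 0 : ℝ) ≤ X ∧
      ∀ m : Fin k, |ζ m * v 0 - v m.succ| ≤ X ^ (-η) := by
  obtain ⟨v, hv, hX, happ⟩ := hasSolutions_one_iff.mp hs
  have hv0 : v 0 ≠ 0 := by
    intro h0
    refine hv (funext fun i => Fin.cases h0 (fun m => ?_) i)
    have := (happ m).trans_lt hε
    rw [h0, Int.cast_zero, mul_zero, zero_sub, abs_neg] at this
    exact Int.abs_lt_one_iff.mp (by exact_mod_cast this)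
  have hsign : |((v 0).sign : ℝ)| = 1 := by exact_mod_cast Int.abs_sign_of_ne_zero hv0
  refine ⟨(v 0).sign • v, ?_, ?_, fun m => ?_⟩
  · simpa [Int.sign_mul_self_eq_abs] using hv0
  · simpa [Int.sign_mul_self_eq_abs] using hX
  · simp only [Pi.smul_apply, smul_eq_mul, Int.cast_mul]
    rw [show ζ m * ((v 0).sign * v 0 : ℝ) - (v 0).sign * v m.succ
        = (v 0).sign * (ζ m * v 0 - v m.succ) by ring, abs_mul, hsign, one_mul]
    exact happ m

lemma exists_seq_of_hasSolutions_pow {k : ℕ} {ζ η X : ℝ} (hε : X ^ (-η) < 1)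
    (hs : HasSolutions k (fun i => ζ ^ ((i : ℕ) + 1)) η X 1) :
    ∃ W : ℕ → ℤ, 0 < W 0 ∧ (W 0 : ℝ) ≤ X ∧ ∀ m ≤ k, |ζ ^ m * W 0 - W m| ≤ X ^ (-η) := by
  obtain ⟨v, hv0, hX, happ⟩ := exists_pos_of_hasSolutions_one hε hs
  refine ⟨fun m => if h : m < k + 1 then v ⟨m, h⟩ else 0, hv0, hX, fun m hm => ?_⟩
  cases m with
  | zero =>
    have hXpos : 0 < X := hX.trans_lt' (by exact_mod_cast hv0)
    simpa using Real.rpow_nonneg hXpos.le _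
  | succ m =>
    simp only [dif_pos (Nat.succ_pos k), dif_pos (Nat.succ_lt_succ hm)]
    exact happ ⟨m, hm⟩

lemma mul_eq_mul_of_abs_lt_one {ζ : ℝ} {a b q p : ℤ}
    (h : |(q : ℝ)| * |ζ * a - b| + |(a : ℝ)| * |ζ * q - p| < 1) : a * p = b * q := by
  have hint : |((a * p - b * q : ℤ) : ℝ)| < 1 := by
    calc |((a * p - b * q : ℤ) : ℝ)| = |q * (ζ * a - b) - a * (ζ * q - p)| := by
          push_cast; ring_nf
      _ ≤ |(q : ℝ)| * |ζ * a - b| + |(a : ℝ)| * |ζ * q - p| := by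
          rw [← abs_mul, ← abs_mul]; exact abs_sub _ _
      _ < 1 := h
  exact sub_eq_zero.mp (Int.abs_lt_one_iff.mp (by exact_mod_cast hint))

lemma pow_dvd_of_forall_mul_eq_mul {q p : ℤ} (hqp : IsCoprime q p) {k : ℕ} {W : ℕ → ℤ}
    (hW : ∀ m < k, W m * p = W (m + 1) * q) : q ^ k ∣ W 0 := by
  have hpow : ∀ m ≤ k, W 0 * p ^ m = W m * q ^ m := by
    intro m hm
    induction m with
    | zero => simp
    | succ m ih =>
      calc W 0 * p ^ (m + 1) = W 0 * p ^ m * p := by ring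
        _ = W m * p * q ^ m := by rw [ih (by omega)]; ring
        _ = W (m + 1) * q ^ (m + 1) := by rw [hW m (by omega)]; ring
  exact hqp.pow.dvd_of_dvd_mul_right ⟨W k, by rw [hpow k le_rfl, mul_comm]⟩

lemma pow_dvd_of_abs_pow_mul_sub_le {k : ℕ} {ζ ε X : ℝ} {q p : ℤ} (hqp : IsCoprime q p)
    {W : ℕ → ℤ} (hX : |(W 0 : ℝ)| ≤ X) (hW : ∀ m ≤ k, |ζ ^ m * W 0 - W m| ≤ ε)
    (hsmall : |(q : ℝ)| * ((1 + |ζ|) * ε) + ((1 + |ζ|) ^ k * X + ε) * |ζ * q - p| < 1) :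
    q ^ k ∣ W 0 := by
  refine pow_dvd_of_forall_mul_eq_mul hqp fun m hm => mul_eq_mul_of_abs_lt_one (ζ := ζ) ?_
  have hstep : |ζ * W m - W (m + 1)| ≤ (1 + |ζ|) * ε := by
    calc |ζ * W m - W (m + 1)|
        = |(ζ ^ (m + 1) * W 0 - W (m + 1)) - ζ * (ζ ^ m * W 0 - W m)| := by ring_nf
      _ ≤ |ζ ^ (m + 1) * W 0 - W (m + 1)| + |ζ| * |ζ ^ m * W 0 - W m| := by
          rw [← abs_mul]; exact abs_sub _ _
      _ ≤ ε + |ζ| * ε := by gcongr <;> exact hW _ (by omega)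
      _ = (1 + |ζ|) * ε := by ring
  have hsize : |(W m : ℝ)| ≤ (1 + |ζ|) ^ k * X + ε := by
    calc |(W m : ℝ)| = |ζ ^ m * W 0 - (ζ ^ m * W 0 - W m)| := by ring_nf
      _ ≤ |ζ| ^ m * |(W 0 : ℝ)| + |ζ ^ m * W 0 - W m| := by
          rw [← abs_pow, ← abs_mul]; exact abs_sub _ _
      _ ≤ (1 + |ζ|) ^ k * X + ε := by
          gcongr
          · calc |ζ| ^ m ≤ (1 + |ζ|) ^ m := by gcongr; linarith
              _ ≤ (1 + |ζ|) ^ k := pow_le_pow_right₀ (by linarith [abs_nonneg ζ]) hm.le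
          · exact hW m hm.le
  calc |(q : ℝ)| * |ζ * W m - W (m + 1)| + |(W m : ℝ)| * |ζ * q - p|
      ≤ |(q : ℝ)| * ((1 + |ζ|) * ε) + ((1 + |ζ|) ^ k * X + ε) * |ζ * q - p| := by gcongr
    _ < 1 := hsmall

lemma Irrational.eventually_lt_abs_mul_sub {ζ : ℝ} (hζ : Irrational ζ) (B : ℝ) :
    ∀ᶠ ε in 𝓝 (0 : ℝ), ∀ q p : ℤ, 0 < q → (q : ℝ) < B → ε < |ζ * q - p| := by
  have hpos : ∀ q ∈ Finset.Ioo (0 : ℤ) ⌈B⌉, 0 < |ζ * q - round (ζ * q)| := fun q hq =>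
    abs_pos.mpr (sub_ne_zero.mpr ((hζ.mul_intCast (Finset.mem_Ioo.mp hq).1.ne').ne_int _))
  filter_upwards [(eventually_all_finset _).mpr fun q hq => eventually_lt_nhds (hpos q hq)]
    with ε hε q p hq hqB
  exact (hε q (Finset.mem_Ioo.mpr ⟨hq, Int.lt_ceil.mpr hqB⟩)).trans_le (round_le _ p)

lemma exists_coprime_of_seq {k : ℕ} (hk : 0 < k) {ζ X η₀ : ℝ} (hη₀ : 0 < η₀) (hX : 1 ≤ X)
    {W : ℕ → ℤ} (hW0 : 0 < W 0) (hWX : (W 0 : ℝ) ≤ X)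
    (hW : ∀ m ≤ k, |ζ ^ m * W 0 - W m| ≤ X ^ (-η₀))
    (hsmall : (2 + |ζ| + (1 + |ζ|) ^ k) * (X * X ^ (-η₀)) < 1) :
    ∃ q p : ℤ, IsCoprime q p ∧ 0 < q ∧ |ζ * q - p| ≤ X ^ (-η₀) ∧
      |ζ * q - p| ≤ (q : ℝ) ^ (1 - k * (1 + η₀)) := by
  obtain ⟨g, q, p, hg, hqp, hWq, hWp⟩ :=
    Int.exists_gcd_one' (n := W 1) (Int.gcd_pos_of_ne_zero_left _ hW0.ne')
  set ε := X ^ (-η₀)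
  set δ := |ζ * q - p|
  have hg1 : (1 : ℝ) ≤ g := by exact_mod_cast hg
  have hq : 0 < q := pos_of_mul_pos_left (hWq ▸ hW0) (by positivity)
  have hq1 : (1 : ℝ) ≤ q := by exact_mod_cast hq
  have hε : ε ≤ 1 := Real.rpow_le_one_of_one_le_of_nonpos hX (by linarith)
  have hgδ : g * δ ≤ ε := by
    have := hW 1 hk
    rwa [hWq, hWp, pow_one, Int.cast_mul, Int.cast_mul, Int.cast_natCast, ← mul_assoc,
      ← sub_mul, abs_mul, Nat.abs_cast, mul_comm] at this
  have hδε : δ ≤ ε := le_trans (le_mul_of_one_le_left (abs_nonneg _) hg1) hgδ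
  have hqX : (q : ℝ) ≤ X := by
    refine le_trans ?_ hWX
    rw [hWq, Int.cast_mul, Int.cast_natCast]
    exact le_mul_of_one_le_right (by positivity) hg1
  have hdvd : q ^ k ∣ W 0 := by
    refine pow_dvd_of_abs_pow_mul_sub_le (X := X) (Int.isCoprime_iff_gcd_eq_one.mpr hqp)
      (by rwa [abs_of_pos (by exact_mod_cast hW0)]) hW (lt_of_le_of_lt ?_ hsmall)
    rw [abs_of_pos (by positivity)]
    have hεpos : 0 ≤ ε := (abs_nonneg _).trans hδε
    calc (q : ℝ) * ((1 + |ζ|) * ε) + ((1 + |ζ|) ^ k * X + ε) * δ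
        ≤ X * ((1 + |ζ|) * ε) + ((1 + |ζ|) ^ k * X + X) * ε := by
          gcongr
          linarith
      _ = (2 + |ζ| + (1 + |ζ|) ^ k) * (X * ε) := by ring
  have hW0pos : (0 : ℝ) < W 0 := by exact_mod_cast hW0
  have hqk : (q : ℝ) ^ k ≤ W 0 := by exact_mod_cast Int.le_of_dvd hW0 hdvd
  refine ⟨q, p, Int.isCoprime_iff_gcd_eq_one.mpr hqp, hq, hδε, ?_⟩
  calc δ ≤ ε / g := by rw [le_div_iff₀ (by positivity : (0 : ℝ) < g)]; linarith
    _ ≤ (W 0 : ℝ) ^ (-η₀) / g := by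
      gcongr
      exact Real.rpow_le_rpow_of_nonpos hW0pos hWX (by linarith : -η₀ ≤ 0)
    _ = q * (W 0 : ℝ) ^ (-(1 + η₀)) := by
      rw [neg_add, Real.rpow_add hW0pos, Real.rpow_neg_one, hWq]
      push_cast
      field_simp
    _ ≤ q * ((q : ℝ) ^ k) ^ (-(1 + η₀)) := by
      refine mul_le_mul_of_nonneg_left ?_ (by positivity)
      exact Real.rpow_le_rpow_of_nonpos (by positivity) hqk (by linarith)
    _ = (q : ℝ) ^ (1 - k * (1 + η₀)) := by
      rw [← Real.rpow_natCast_mul (by positivity), sub_eq_add_neg, Real.rpow_add (by positivity),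
        Real.rpow_one, neg_mul_eq_mul_neg]

lemma exists_coprime_abs_mul_sub_le {k : ℕ} (hk : 0 < k) {ζ : ℝ} (hζ : Irrational ζ) {η₀ : ℝ}
    (hη₀ : 1 < η₀) (hfreq : ∃ᶠ X in atTop, HasSolutions k (fun i => ζ ^ ((i : ℕ) + 1)) η₀ X 1)
    (B : ℝ) :
    ∃ q p : ℤ, IsCoprime q p ∧ 0 < q ∧ B ≤ q ∧ |ζ * q - p| ≤ (q : ℝ) ^ (1 - k * (1 + η₀)) := by
  have hε : Tendsto (fun X : ℝ => X ^ (-η₀)) atTop (𝓝 0) := tendsto_rpow_neg_atTop (by linarith)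
  have hXε : Tendsto (fun X : ℝ => (2 + |ζ| + (1 + |ζ|) ^ k) * (X * X ^ (-η₀))) atTop (𝓝 0) := by
    have := (tendsto_rpow_neg_atTop (sub_pos.mpr hη₀)).const_mul (2 + |ζ| + (1 + |ζ|) ^ k)
    rw [mul_zero] at this
    refine this.congr' ((eventually_gt_atTop 0).mono fun X hX => ?_)
    rw [neg_sub, sub_eq_neg_add, Real.rpow_add hX, Real.rpow_one, mul_comm (X ^ _)]
  obtain ⟨X, hs, hX, hsmall, hfar⟩ := (hfreq.and_eventually ((eventually_gt_atTop 1).and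
    ((hXε.eventually_lt_const one_pos).and
      (hε.eventually (hζ.eventually_lt_abs_mul_sub B))))).exists
  obtain ⟨W, hW0, hWX, hW⟩ :=
    exists_seq_of_hasSolutions_pow (Real.rpow_lt_one_of_one_lt_of_neg hX (by linarith)) hs
  obtain ⟨q, p, hqp, hq, hδε, hδ⟩ :=
    exists_coprime_of_seq hk (by linarith) hX.le hW0 hWX hW hsmall
  refine ⟨q, p, hqp, hq, ?_, hδ⟩
  by_contra! hqB
  exact (hfar q p hq hqB).not_ge hδε

lemma not_eventually_hasSolutions_pow {k : ℕ} (hk : 0 < k) {ζ : ℝ} (hζ : Irrational ζ)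
    {η₀ η : ℝ} (hη₀ : 1 < η₀)
    (hfreq : ∃ᶠ X in atTop, HasSolutions k (fun i => ζ ^ ((i : ℕ) + 1)) η₀ X 1)
    (hη : (k : ℝ)⁻¹ < η) :
    ¬ ∀ᶠ X in atTop, HasSolutions k (fun i => ζ ^ ((i : ℕ) + 1)) η X 1 := by
  intro hev
  set M := 1 + |ζ|
  have hk' : (1 : ℝ) ≤ k := by exact_mod_cast hk
  have hkη : 1 < k * η := by rwa [inv_lt_iff_one_lt_mul₀ (by positivity), mul_comm] at hη
  have hkη₀ : 1 < k * η₀ := by nlinarith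
  have hη0 : 0 < η := (by positivity : (0 : ℝ) < (k : ℝ)⁻¹).trans hη
  have hlim : Tendsto (fun t : ℝ => M * 2 ^ η * t ^ (-(k * η - 1)) +
      (M ^ k / 2 + 1) * t ^ (-(k * η₀ - 1))) atTop (𝓝 0) := by
    simpa using ((tendsto_rpow_neg_atTop (sub_pos.mpr hkη)).const_mul (M * 2 ^ η)).add
      ((tendsto_rpow_neg_atTop (sub_pos.mpr hkη₀)).const_mul (M ^ k / 2 + 1))
  have hX : Tendsto (fun t : ℝ => t ^ k / 2) atTop atTop :=
    (tendsto_pow_atTop hk.ne').atTop_div_const two_pos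
  obtain ⟨B, hB⟩ := eventually_atTop.mp (((hlim.eventually_lt_const one_pos).and
    (eventually_ge_atTop 1)).and (hX.eventually (hev.and (eventually_gt_atTop 1))))
  obtain ⟨q, p, hqp, hq, hBq, hδ⟩ := exists_coprime_abs_mul_sub_le hk hζ hη₀ hfreq B
  obtain ⟨⟨hsmall, hq1⟩, hs, hX1⟩ := hB q hBq
  -- A solution at `X = q ^ k / 2` is forced to have `q ^ k ∣ x`, i.e. `x ≥ 2 X`.
  set X := (q : ℝ) ^ k / 2 with hXq
  have hq0 : (0 : ℝ) < q := by linarith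
  obtain ⟨W, hW0, hWX, hW⟩ :=
    exists_seq_of_hasSolutions_pow (Real.rpow_lt_one_of_one_lt_of_neg hX1 (by linarith)) hs
  have hXε : q * X ^ (-η) = 2 ^ η * (q : ℝ) ^ (-(k * η - 1)) := by
    rw [Real.div_rpow (by positivity) zero_le_two, ← Real.rpow_natCast_mul hq0.le,
      Real.rpow_neg zero_le_two, neg_sub, sub_eq_add_neg, Real.rpow_add hq0, Real.rpow_one]
    field_simp
  have hXδ : X * (q : ℝ) ^ (1 - k * (1 + η₀)) = (q : ℝ) ^ (-(k * η₀ - 1)) / 2 := by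
    rw [hXq, div_mul_eq_mul_div, ← Real.rpow_natCast, ← Real.rpow_add hq0]
    ring_nf
  have hδ' : (q : ℝ) ^ (1 - k * (1 + η₀)) ≤ (q : ℝ) ^ (-(k * η₀ - 1)) :=
    Real.rpow_le_rpow_of_exponent_le hq1 (by linarith)
  have hε1 : X ^ (-η) ≤ 1 := (Real.rpow_lt_one_of_one_lt_of_neg hX1 (by linarith)).le
  have hdvd : q ^ k ∣ W 0 := by
    refine pow_dvd_of_abs_pow_mul_sub_le (X := X) hqp
      (by rwa [abs_of_pos (by exact_mod_cast hW0)]) hW (lt_of_le_of_lt ?_ hsmall)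
    rw [abs_of_pos hq0]
    calc (q : ℝ) * (M * X ^ (-η)) + (M ^ k * X + X ^ (-η)) * |ζ * q - p|
        ≤ (q : ℝ) * (M * X ^ (-η)) + (M ^ k * X + 1) * (q : ℝ) ^ (1 - k * (1 + η₀)) := by
          gcongr
      _ = M * (q * X ^ (-η)) + M ^ k * (X * (q : ℝ) ^ (1 - k * (1 + η₀))) +
          (q : ℝ) ^ (1 - k * (1 + η₀)) := by ring
      _ ≤ _ := by rw [hXε, hXδ]; linarith
  have hqk : (q : ℝ) ^ k ≤ X := le_trans (by exact_mod_cast Int.le_of_dvd hW0 hdvd) hWX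
  have : (0 : ℝ) < q ^ k := by positivity
  linarith [hXq]

lemma lambdaHatPow_one_le {k : ℕ} (hk : 0 < k) {ζ : ℝ} (hζ : Irrational ζ)
    (h : 1 < lambdaPow k 1 ζ) : lambdaHatPow k 1 ζ ≤ 1 / (k : ℝ≥0∞) := by
  obtain ⟨_, ⟨η₀, rfl, hfreq⟩, hη₀⟩ := lt_sSup_iff.mp h
  refine sSup_le ?_
  rintro _ ⟨η, rfl, hev⟩
  rw [← ENNReal.ofReal_inv_natCast hk]
  refine ENNReal.ofReal_le_ofReal (not_lt.mp fun hη => ?_)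
  exact not_eventually_hasSolutions_pow hk hζ (ENNReal.one_lt_ofReal.mp hη₀)
    (frequently_atTop.mpr hfreq) hη (eventually_atTop.mpr hev)

/-- Corollary: if `λ_{k,1}(ζ) > 1` for an irrational real `ζ`, then `λ̂_{k,1}(ζ) = 1/k`. -/
theorem stmt8 (k : ℕ) (hk : 0 < k) (ζ : ℝ) (hζ : Irrational ζ)
    (h : 1 < lambdaPow k 1 ζ) :
    lambdaHatPow k 1 ζ = 1 / (k : ℝ≥0∞) :=
  le_antisymm (lambdaHatPow_one_le hk hζ h) (one_div_le_lambdaHatVec_one hk _)
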